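/- Let C and D be Hopf algebras; let M be a C-bicomodule whose left C-comodule structure is trivial; suppose M is a D-bimodule, regarded as a left D-module via the adjoint action d.m = Σ d_{(1)} m S(d_{(2)}); suppose C is the trivial D-bimodule via the counit, and that the right C-comodule structure map of M is a morphism of D-bimodules. Equip each M ⊗ C^{⊗i} with the left D-module structure d.(m ⊗ c¹ ⊗ ⋯ ⊗ cⁱ) = Σ d_{(1)} m S(d_{(2)}) ⊗ c¹ ⊗ ⋯ ⊗ cⁱ. Then each differential dⁱ: M ⊗ C^{⊗i} → M ⊗ C^{⊗(i+1)} of the coHochschild complex is a morphism of left D-modules, and consequently every coHochschild homology group Hoch^i(C, M) inherits a left adjoint D-module structure. -/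

import Mathlib

/-!
STATEMENT 4: Let `C`, `D` be Hopf algebras, `M` a `C`-bicomodule with trivial left
`C`-comodule structure, also a `D`-bimodule regarded as a left `D`-module via the
adjoint action `d.m = Σ d₍₁₎ m S(d₍₂₎)`; `C` is the trivial `D`-bimodule via the
counit, and the right `C`-coaction of `M` is a morphism of `D`-bimodules.  Equip
`M ⊗ C^{⊗i}` with `d.(m ⊗ c¹ ⊗ ⋯ ⊗ cⁱ) = Σ d₍₁₎ m S(d₍₂₎) ⊗ c¹ ⊗ ⋯ ⊗ cⁱ`.  Then
every differential of the coHochschild complex is a morphism of left `D`-modules,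
and consequently every coHochschild homology group `Hoch^i(C,M)` inherits a left
adjoint `D`-module structure.
-/

noncomputable section

open TensorProduct

variable (K C : Type) [CommRing K] [AddCommGroup C] [Module K C]

/-- A bicomodule datum over a coalgebra `C`. -/
structure BicomodData where
  carrier : Type
  [acg : AddCommGroup carrier]
  [mod : Module K carrier]
  coactL : carrier →ₗ[K] C ⊗[K] carrier
  coactR : carrier →ₗ[K] carrier ⊗[K] C

attribute [instance] BicomodData.acg BicomodData.mod

variable {K C} (comul : C →ₗ[K] C ⊗[K] C)

/-- Tensoring a bicomodule with `C` on the right. -/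
def BicomodData.step (B : BicomodData K C) : BicomodData K C where
  carrier := B.carrier ⊗[K] C
  coactL := (TensorProduct.assoc K C B.carrier C).toLinearMap ∘ₗ
    (LinearMap.rTensor C B.coactL)
  coactR := (TensorProduct.assoc K B.carrier C C).symm.toLinearMap ∘ₗ
    (LinearMap.lTensor B.carrier comul)

/-- `cochain comul i B` has carrier `B.carrier ⊗ C^{⊗ i}`. -/
def cochain : ℕ → BicomodData K C → BicomodData K C
  | 0, B => B
  | (i+1), B => cochain i (B.step comul)

/-- Functoriality of `cochain` in the coefficient module. -/
def cochainMap : (i : ℕ) → (B B' : BicomodData K C) → (B.carrier →ₗ[K] B'.carrier) →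
    ((cochain comul i B).carrier →ₗ[K] (cochain comul i B').carrier)
  | 0, _, _, f => f
  | (i+1), B, B', f => cochainMap i (B.step comul) (B'.step comul) (LinearMap.rTensor C f)

/-- The coHochschild (Cartier) differential. -/
def cobarD : (i : ℕ) → (B : BicomodData K C) →
    ((cochain comul i B).carrier →ₗ[K] (cochain comul (i+1) B).carrier)
  | 0, B => B.coactR - (TensorProduct.comm K C B.carrier).toLinearMap ∘ₗ B.coactL
  | (i+1), B =>
      show (cochain comul i (B.step comul)).carrier →ₗ[K]
          (cochain comul (i+1) (B.step comul)).carrier from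
        (show (cochain comul i (B.step comul)).carrier →ₗ[K]
            (cochain comul (i+1) (B.step comul)).carrier from
          cochainMap comul i (B.step comul) ((B.step comul).step comul)
            (LinearMap.rTensor C B.coactR)) - cobarD i (B.step comul)

variable (D : Type) [AddCommGroup D] [Module K D]

/-- The left `D`-module structure on `M ⊗ C^{⊗ i}` induced by a left `D`-action on
the coefficients: `d.(m ⊗ c¹ ⊗ ⋯ ⊗ cⁱ) = (d.m) ⊗ c¹ ⊗ ⋯ ⊗ cⁱ`. -/
def Dact : (i : ℕ) → (B : BicomodData K C) → (D ⊗[K] B.carrier →ₗ[K] B.carrier) →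
    (D ⊗[K] (cochain comul i B).carrier →ₗ[K] (cochain comul i B).carrier)
  | 0, _, a => a
  | (i+1), B, a => Dact i (B.step comul)
      ((LinearMap.rTensor C a) ∘ₗ (TensorProduct.assoc K D B.carrier C).symm.toLinearMap)

variable {D} [Ring D] [HopfAlgebra K D]

/-- The adjoint action `d ⊗ m ↦ Σ d₍₁₎ m S(d₍₂₎)` built from a `D`-bimodule
structure `(aL, aR)` on `M`. -/
def adjointAction {M : Type} [AddCommGroup M] [Module K M]
    (aL : D ⊗[K] M →ₗ[K] M) (aR : M ⊗[K] D →ₗ[K] M) : D ⊗[K] M →ₗ[K] M :=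
  aR ∘ₗ (LinearMap.rTensor D aL) ∘ₗ
    (TensorProduct.assoc K D M D).symm.toLinearMap ∘ₗ
      (LinearMap.lTensor D (LinearMap.lTensor M (HopfAlgebra.antipode (R := K) (A := D)))) ∘ₗ
        (LinearMap.lTensor D (TensorProduct.comm K D M).toLinearMap) ∘ₗ
          (TensorProduct.assoc K D D M).toLinearMap ∘ₗ
            (LinearMap.rTensor M (Coalgebra.comul (R := K) (A := D)))

/-
For each `d ∈ D` the operator `m ↦ Σ d₍₁₎ m S(d₍₂₎)` is a sum of composites of left and
right multiplications. Each of these commutes with the right coaction by hypothesis and with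
the trivial left coaction automatically, so `d` acts on `M` by bicomodule endomorphisms. The
coHochschild complex is functorial in bicomodule maps, and `d` acts on `M ⊗ C^{⊗i}` by the
induced map, so every differential commutes with the action. Cocycles and coboundaries are
then stable under `D`, and the action descends to homology.
-/

open LinearMap

theorem sub_comp_eq_comp_sub {R M N P Q : Type*} [Semiring R] [AddCommGroup M] [Module R M]
    [AddCommGroup N] [Module R N] [AddCommGroup P] [Module R P] [AddCommGroup Q] [Module R Q]
    {f g : M →ₗ[R] N} {f' g' : P →ₗ[R] Q} {p : P →ₗ[R] M} {q : Q →ₗ[R] N}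
    (hf : f ∘ₗ p = q ∘ₗ f') (hg : g ∘ₗ p = q ∘ₗ g') : (f - g) ∘ₗ p = q ∘ₗ (f' - g') := by
  rw [sub_comp, comp_sub, hf, hg]

section TensorCurry

variable {E M N : Type*} [AddCommGroup E] [Module K E] [AddCommGroup M] [Module K M]
  [AddCommGroup N] [Module K N]

theorem curry_rTensor_comp_assoc_symm (a : E ⊗[K] M →ₗ[K] N) (d : E) :
    TensorProduct.curry (a.rTensor C ∘ₗ (TensorProduct.assoc K E M C).symm.toLinearMap) d =
      (TensorProduct.curry a d).rTensor C := by
  ext m c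
  simp

theorem flip_curry_rTensor_comp_assoc_comm (a : M ⊗[K] E →ₗ[K] N) (d : E) :
    (TensorProduct.curry (a.rTensor C ∘ₗ (TensorProduct.assoc K M E C).symm.toLinearMap ∘ₗ
        (TensorProduct.comm K C E).toLinearMap.lTensor M ∘ₗ
          (TensorProduct.assoc K M C E).toLinearMap)).flip d =
      ((TensorProduct.curry a).flip d).rTensor C := by
  ext m c
  simp

end TensorCurry

section Invariant

variable {E N N' : Type*} [AddCommGroup E] [Module K E] [AddCommGroup N] [Module K N]
  [AddCommGroup N'] [Module K N']

def IsInvariantSubmodule (a : E ⊗[K] N →ₗ[K] N) (P : Submodule K N) : Prop :=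
  ∀ d, ∀ n ∈ P, a (d ⊗ₜ n) ∈ P

variable {a : E ⊗[K] N →ₗ[K] N} {P : Submodule K N}

theorem IsInvariantSubmodule.apply_lTensor_subtype_mem (hP : IsInvariantSubmodule a P)
    (y : E ⊗[K] P) : a (P.subtype.lTensor E y) ∈ P := by
  induction y using TensorProduct.induction_on with
  | zero => simp
  | tmul d n => exact hP d n n.2
  | add y z hy hz => simpa only [map_add] using add_mem hy hz

theorem IsInvariantSubmodule.exists_subtype_comp_eq (hP : IsInvariantSubmodule a P) :
    ∃ aP : E ⊗[K] P →ₗ[K] P, P.subtype ∘ₗ aP = a ∘ₗ P.subtype.lTensor E :=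
  ⟨codRestrict P _ hP.apply_lTensor_subtype_mem, subtype_comp_codRestrict _ _ _⟩

theorem IsInvariantSubmodule.exists_comp_lTensor_mkQ_eq (hP : IsInvariantSubmodule a P) :
    ∃ a' : E ⊗[K] (N ⧸ P) →ₗ[K] N ⧸ P, a' ∘ₗ P.mkQ.lTensor E = P.mkQ ∘ₗ a := by
  have hle : range (TensorProduct.map id P.subtype) ≤ ker (P.mkQ ∘ₗ a) := by
    rintro _ ⟨y, rfl⟩
    rw [mem_ker, comp_apply, Submodule.mkQ_apply, Submodule.Quotient.mk_eq_zero]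
    exact hP.apply_lTensor_subtype_mem y
  refine ⟨(range _).liftQ _ hle ∘ₗ (TensorProduct.tensorQuotientEquiv E P).toLinearMap, ?_⟩
  ext d n
  simp

theorem isInvariantSubmodule_ker {f : N →ₗ[K] N'} {a' : E ⊗[K] N' →ₗ[K] N'}
    (hf : f ∘ₗ a = a' ∘ₗ f.lTensor E) : IsInvariantSubmodule a (ker f) := by
  intro d n hn
  rw [mem_ker] at hn ⊢
  simpa [hn] using LinearMap.congr_fun hf (d ⊗ₜ n)

theorem isInvariantSubmodule_range {f : N' →ₗ[K] N} {a' : E ⊗[K] N' →ₗ[K] N'}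
    (hf : f ∘ₗ a' = a ∘ₗ f.lTensor E) : IsInvariantSubmodule a (range f) := by
  rintro d _ ⟨n, rfl⟩
  exact ⟨a' (d ⊗ₜ n), by simpa using LinearMap.congr_fun hf (d ⊗ₜ n)⟩

theorem IsInvariantSubmodule.comap_subtype {Q : Submodule K N} {aQ : E ⊗[K] Q →ₗ[K] Q}
    (hQ : Q.subtype ∘ₗ aQ = a ∘ₗ Q.subtype.lTensor E) (hP : IsInvariantSubmodule a P) :
    IsInvariantSubmodule aQ (P.comap Q.subtype) := by
  intro d n hn
  have h := LinearMap.congr_fun hQ (d ⊗ₜ n)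
  simp only [comp_apply, lTensor_tmul, Submodule.coe_subtype] at h
  simpa [h] using hP d n hn

end Invariant

namespace BicomodData

structure IsHom (B B' : BicomodData K C) (f : B.carrier →ₗ[K] B'.carrier) : Prop where
  coactL_comp : B'.coactL ∘ₗ f = f.lTensor C ∘ₗ B.coactL
  coactR_comp : B'.coactR ∘ₗ f = f.rTensor C ∘ₗ B.coactR

namespace IsHom

variable {B B' B'' : BicomodData K C}

theorem id (B : BicomodData K C) : IsHom B B LinearMap.id :=
  ⟨by simp, by simp⟩

theorem zero : IsHom B B' 0 :=
  ⟨by simp, by simp⟩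

theorem comp {g : B'.carrier →ₗ[K] B''.carrier} {f : B.carrier →ₗ[K] B'.carrier}
    (hg : IsHom B' B'' g) (hf : IsHom B B' f) : IsHom B B'' (g ∘ₗ f) :=
  ⟨by rw [lTensor_comp, comp_assoc, ← hf.coactL_comp, ← comp_assoc, hg.coactL_comp, comp_assoc],
   by rw [rTensor_comp, comp_assoc, ← hf.coactR_comp, ← comp_assoc, hg.coactR_comp, comp_assoc]⟩

theorem add {f g : B.carrier →ₗ[K] B'.carrier} (hf : IsHom B B' f) (hg : IsHom B B' g) :
    IsHom B B' (f + g) :=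
  ⟨by rw [lTensor_add, comp_add, add_comp, hf.coactL_comp, hg.coactL_comp],
   by rw [rTensor_add, comp_add, add_comp, hf.coactR_comp, hg.coactR_comp]⟩

theorem smul (r : K) {f : B.carrier →ₗ[K] B'.carrier} (hf : IsHom B B' f) :
    IsHom B B' (r • f) :=
  ⟨by rw [lTensor_smul, comp_smul, smul_comp, hf.coactL_comp],
   by rw [rTensor_smul, comp_smul, smul_comp, hf.coactR_comp]⟩

theorem step {f : B.carrier →ₗ[K] B'.carrier} (hf : IsHom B B' f) :
    IsHom (B.step comul) (B'.step comul) (f.rTensor C) := by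
  constructor
  · show ((TensorProduct.assoc K C B'.carrier C).toLinearMap ∘ₗ B'.coactL.rTensor C) ∘ₗ
        f.rTensor C = (f.rTensor C).lTensor C ∘ₗ
          ((TensorProduct.assoc K C B.carrier C).toLinearMap ∘ₗ B.coactL.rTensor C)
    rw [comp_assoc, ← rTensor_comp, hf.coactL_comp, rTensor_comp, ← comp_assoc,
      ← lTensor_rTensor_comp_assoc, comp_assoc]
  · show ((TensorProduct.assoc K B'.carrier C C).symm.toLinearMap ∘ₗ comul.lTensor B'.carrier) ∘ₗ
        f.rTensor C = (f.rTensor C).rTensor C ∘ₗ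
          ((TensorProduct.assoc K B.carrier C C).symm.toLinearMap ∘ₗ comul.lTensor B.carrier)
    rw [comp_assoc, lTensor_comp_rTensor, ← rTensor_comp_lTensor, rTensor_tensor]
    ext m c
    simp

end IsHom

def endSubalgebra (B : BicomodData K C) : Subalgebra K (Module.End K B.carrier) where
  carrier := {f | IsHom B B f}
  mul_mem' hf hg := hf.comp hg
  one_mem' := IsHom.id B
  add_mem' hf hg := hf.add hg
  zero_mem' := IsHom.zero
  algebraMap_mem' r := by
    rw [Algebra.algebraMap_eq_smul_one]
    exact (IsHom.id B).smul r

variable {B : BicomodData K C} {E : Type} [AddCommGroup E] [Module K E] [One C]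

theorem mem_endSubalgebra_of_coactL_eq_mk_one
    (htriv : B.coactL = TensorProduct.mk K C B.carrier 1) {f : Module.End K B.carrier}
    (hf : B.coactR ∘ₗ f = f.rTensor C ∘ₗ B.coactR) : f ∈ B.endSubalgebra :=
  ⟨by ext; simp [htriv], hf⟩

theorem curry_mem_endSubalgebra (htriv : B.coactL = TensorProduct.mk K C B.carrier 1)
    {a : E ⊗[K] B.carrier →ₗ[K] B.carrier}
    (ha : B.coactR ∘ₗ a = a.rTensor C ∘ₗ (TensorProduct.assoc K E B.carrier C).symm.toLinearMap ∘ₗ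
      B.coactR.lTensor E) (d : E) :
    TensorProduct.curry a d ∈ B.endSubalgebra := by
  refine mem_endSubalgebra_of_coactL_eq_mk_one htriv (LinearMap.ext fun m => ?_)
  rw [← curry_rTensor_comp_assoc_symm]
  simpa using LinearMap.congr_fun ha (d ⊗ₜ m)

theorem flip_curry_mem_endSubalgebra (htriv : B.coactL = TensorProduct.mk K C B.carrier 1)
    {a : B.carrier ⊗[K] E →ₗ[K] B.carrier}
    (ha : B.coactR ∘ₗ a = a.rTensor C ∘ₗ (TensorProduct.assoc K B.carrier E C).symm.toLinearMap ∘ₗ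
      (TensorProduct.comm K C E).toLinearMap.lTensor B.carrier ∘ₗ
        (TensorProduct.assoc K B.carrier C E).toLinearMap ∘ₗ B.coactR.rTensor E) (d : E) :
    (TensorProduct.curry a).flip d ∈ B.endSubalgebra := by
  refine mem_endSubalgebra_of_coactL_eq_mk_one htriv (LinearMap.ext fun m => ?_)
  rw [← flip_curry_rTensor_comp_assoc_comm]
  simpa using LinearMap.congr_fun ha (m ⊗ₜ d)

end BicomodData

theorem cochainMap_comp : ∀ (i : ℕ) {B B' B'' : BicomodData K C}
    (g : B'.carrier →ₗ[K] B''.carrier) (f : B.carrier →ₗ[K] B'.carrier),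
    cochainMap comul i B' B'' g ∘ₗ cochainMap comul i B B' f = cochainMap comul i B B'' (g ∘ₗ f)
  | 0, _, _, _, _, _ => rfl
  | i + 1, _, _, _, g, f =>
    (cochainMap_comp i _ _).trans (congrArg _ (rTensor_comp C g f).symm)

theorem cobarD_comp_cochainMap : ∀ (i : ℕ) {B B' : BicomodData K C}
    {f : B.carrier →ₗ[K] B'.carrier}, B.IsHom B' f →
    cobarD comul i B' ∘ₗ cochainMap comul i B B' f =
      cochainMap comul (i + 1) B B' f ∘ₗ cobarD comul i B
  | 0, B, B', f, hf => by
    show (B'.coactR - (TensorProduct.comm K C B'.carrier).toLinearMap ∘ₗ B'.coactL) ∘ₗ f =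
      f.rTensor C ∘ₗ (B.coactR - (TensorProduct.comm K C B.carrier).toLinearMap ∘ₗ B.coactL)
    rw [sub_comp, comp_sub, comp_assoc, hf.coactL_comp, hf.coactR_comp, ← comp_assoc,
      ← comp_assoc, rTensor_comp_comm]
  | i + 1, B, B', f, hf => by
    have hcoactR : cochainMap comul i (B'.step comul) ((B'.step comul).step comul)
          (B'.coactR.rTensor C) ∘ₗ cochainMap comul i (B.step comul) (B'.step comul) (f.rTensor C) =
        cochainMap comul i ((B.step comul).step comul) ((B'.step comul).step comul)
          ((f.rTensor C).rTensor C) ∘ₗ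
        cochainMap comul i (B.step comul) ((B.step comul).step comul) (B.coactR.rTensor C) := by
      -- `erw`: `(B.step comul).carrier` is `B.carrier ⊗[K] C` only up to unfolding
      erw [cochainMap_comp, cochainMap_comp, ← rTensor_comp, ← rTensor_comp, hf.coactR_comp]
    exact sub_comp_eq_comp_sub hcoactR (cobarD_comp_cochainMap i (hf.step comul))

theorem Dact_tmul : ∀ (i : ℕ) {E : Type} [AddCommGroup E] [Module K E] (B : BicomodData K C)
    (a : E ⊗[K] B.carrier →ₗ[K] B.carrier) (d : E) (x : (cochain comul i B).carrier),
    Dact comul E i B a (d ⊗ₜ x) = cochainMap comul i B B (TensorProduct.curry a d) x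
  | 0, _, _, _, _, _, _, _ => rfl
  | i + 1, E, _, _, B, a, d, x => by
    have h := Dact_tmul i (B.step comul)
      (a.rTensor C ∘ₗ (TensorProduct.assoc K E B.carrier C).symm.toLinearMap) d x
    erw [curry_rTensor_comp_assoc_symm] at h
    exact h

theorem cobarD_comp_Dact {E : Type} [AddCommGroup E] [Module K E] (B : BicomodData K C)
    {a : E ⊗[K] B.carrier →ₗ[K] B.carrier} (ha : ∀ d, TensorProduct.curry a d ∈ B.endSubalgebra)
    (i : ℕ) :
    cobarD comul i B ∘ₗ Dact comul E i B a =
      Dact comul E (i + 1) B a ∘ₗ (cobarD comul i B).lTensor E := by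
  refine TensorProduct.ext' fun d x => ?_
  simp only [comp_apply, lTensor_tmul, Dact_tmul]
  exact LinearMap.congr_fun (cobarD_comp_cochainMap comul i (ha d)) x

section Adjoint

variable {H M : Type} [Ring H] [HopfAlgebra K H] [AddCommGroup M] [Module K M]

-- `d` acts as `Σ ρ(S d₍₂₎) ∘ λ(d₍₁₎)`, with `λ`, `ρ` the left and right multiplications.
theorem curry_adjointAction (aL : H ⊗[K] M →ₗ[K] M) (aR : M ⊗[K] H →ₗ[K] M) :
    TensorProduct.curry (adjointAction aL aR) =
      TensorProduct.lift ((LinearMap.mul K (Module.End K M)).flip.compl₁₂ (TensorProduct.curry aL)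
        ((TensorProduct.curry aR).flip ∘ₗ HopfAlgebra.antipode K)) ∘ₗ Coalgebra.comul := by
  ext d m
  simp only [adjointAction, TensorProduct.curry_apply, comp_apply, rTensor_tmul]
  induction Coalgebra.comul (R := K) d using TensorProduct.induction_on with
  | zero => simp
  | tmul x y => simp
  | add s t hs ht => simp only [add_tmul, map_add, LinearMap.add_apply, hs, ht]

theorem BicomodData.curry_adjointAction_mem_endSubalgebra {B : BicomodData K C}
    {aL : H ⊗[K] B.carrier →ₗ[K] B.carrier} {aR : B.carrier ⊗[K] H →ₗ[K] B.carrier}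
    (hL : ∀ x, TensorProduct.curry aL x ∈ B.endSubalgebra)
    (hR : ∀ y, (TensorProduct.curry aR).flip y ∈ B.endSubalgebra) (d : H) :
    TensorProduct.curry (adjointAction aL aR) d ∈ B.endSubalgebra := by
  rw [curry_adjointAction, comp_apply]
  induction Coalgebra.comul (R := K) d using TensorProduct.induction_on with
  | zero => simp
  | tmul x y => simpa using B.endSubalgebra.mul_mem (hR _) (hL x)
  | add s t hs ht => simpa only [map_add] using B.endSubalgebra.add_mem hs ht

end Adjoint

theorem cobar_differentials_are_D_module_morphisms_general
    {K C : Type} [Field K] [Ring C] [HopfAlgebra K C]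
    {D : Type} [Ring D] [HopfAlgebra K D]
    (B : BicomodData K C)
    -- the left `C`-comodule structure of `M` is trivial
    (htriv : B.coactL = (TensorProduct.mk K C B.carrier) 1)
    -- `M` is a `D`-bimodule via `aL`, `aR`
    (aL : D ⊗[K] B.carrier →ₗ[K] B.carrier) (aR : B.carrier ⊗[K] D →ₗ[K] B.carrier)
    -- the right `C`-coaction of `M` is a morphism of `D`-bimodules, where `D` acts
    -- trivially (through the counit) on the `C`-factor
    (hcoactR_aL : B.coactR ∘ₗ aL =
      (LinearMap.rTensor C aL) ∘ₗ (TensorProduct.assoc K D B.carrier C).symm.toLinearMap ∘ₗ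
        (LinearMap.lTensor D B.coactR))
    (hcoactR_aR : B.coactR ∘ₗ aR =
      (LinearMap.rTensor C aR) ∘ₗ (TensorProduct.assoc K B.carrier D C).symm.toLinearMap ∘ₗ
        (LinearMap.lTensor B.carrier (TensorProduct.comm K C D).toLinearMap) ∘ₗ
          (TensorProduct.assoc K B.carrier C D).toLinearMap ∘ₗ
            (LinearMap.rTensor D B.coactR)) :
    -- (1) every differential of the coHochschild complex is a morphism of left
    -- `D`-modules for the adjoint action on the coefficients
    (∀ i : ℕ,
      (cobarD (Coalgebra.comul (R := K) (A := C)) i B) ∘ₗ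
          Dact (Coalgebra.comul (R := K) (A := C)) D i B (adjointAction aL aR) =
        Dact (Coalgebra.comul (R := K) (A := C)) D (i+1) B (adjointAction aL aR) ∘ₗ
          (LinearMap.lTensor D (cobarD (Coalgebra.comul (R := K) (A := C)) i B))) ∧
    -- (2) consequently the cocycles are a `D`-submodule ...
    (∀ i : ℕ,
      ∃ aker : D ⊗[K] LinearMap.ker (cobarD (Coalgebra.comul (R := K) (A := C)) i B) →ₗ[K]
          LinearMap.ker (cobarD (Coalgebra.comul (R := K) (A := C)) i B),
        (LinearMap.ker (cobarD (Coalgebra.comul (R := K) (A := C)) i B)).subtype ∘ₗ aker =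
          Dact (Coalgebra.comul (R := K) (A := C)) D i B (adjointAction aL aR) ∘ₗ
            (LinearMap.lTensor D
              (LinearMap.ker (cobarD (Coalgebra.comul (R := K) (A := C)) i B)).subtype)) ∧
    -- ... and each coHochschild homology group inherits a left adjoint `D`-module
    -- structure from the one on the cocycles
    (∀ (i : ℕ)
      (aker : D ⊗[K] LinearMap.ker (cobarD (Coalgebra.comul (R := K) (A := C)) (i+1) B) →ₗ[K]
          LinearMap.ker (cobarD (Coalgebra.comul (R := K) (A := C)) (i+1) B)),
      ((LinearMap.ker (cobarD (Coalgebra.comul (R := K) (A := C)) (i+1) B)).subtype ∘ₗ aker =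
        Dact (Coalgebra.comul (R := K) (A := C)) D (i+1) B (adjointAction aL aR) ∘ₗ
          (LinearMap.lTensor D
            (LinearMap.ker (cobarD (Coalgebra.comul (R := K) (A := C)) (i+1) B)).subtype)) →
      ∃ a' : D ⊗[K] (LinearMap.ker (cobarD (Coalgebra.comul (R := K) (A := C)) (i+1) B) ⧸
              (Submodule.comap
                (LinearMap.ker (cobarD (Coalgebra.comul (R := K) (A := C)) (i+1) B)).subtype
                (LinearMap.range (cobarD (Coalgebra.comul (R := K) (A := C)) i B)))) →ₗ[K]
            (LinearMap.ker (cobarD (Coalgebra.comul (R := K) (A := C)) (i+1) B) ⧸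
              (Submodule.comap
                (LinearMap.ker (cobarD (Coalgebra.comul (R := K) (A := C)) (i+1) B)).subtype
                (LinearMap.range (cobarD (Coalgebra.comul (R := K) (A := C)) i B)))),
        a' ∘ₗ (LinearMap.lTensor D
            (Submodule.comap
                (LinearMap.ker (cobarD (Coalgebra.comul (R := K) (A := C)) (i+1) B)).subtype
                (LinearMap.range (cobarD (Coalgebra.comul (R := K) (A := C)) i B))).mkQ) =
          (Submodule.comap
              (LinearMap.ker (cobarD (Coalgebra.comul (R := K) (A := C)) (i+1) B)).subtype
              (LinearMap.range (cobarD (Coalgebra.comul (R := K) (A := C)) i B))).mkQ ∘ₗ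
            aker) := by
  have hL := B.curry_mem_endSubalgebra htriv hcoactR_aL
  have hR := B.flip_curry_mem_endSubalgebra htriv hcoactR_aR
  have hadj := B.curry_adjointAction_mem_endSubalgebra hL hR
  have hequiv := cobarD_comp_Dact (Coalgebra.comul (R := K) (A := C)) B hadj
  exact ⟨hequiv, fun i => (isInvariantSubmodule_ker (hequiv i)).exists_subtype_comp_eq,
    fun i _ hker =>
      ((isInvariantSubmodule_range (hequiv i)).comap_subtype hker).exists_comp_lTensor_mkQ_eq⟩

theorem cobar_differentials_are_D_module_morphisms
    {K C : Type} [Field K] [CharZero K] [Ring C] [HopfAlgebra K C]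
    {D : Type} [Ring D] [HopfAlgebra K D]
    (B : BicomodData K C)
    -- the left `C`-comodule structure of `M` is trivial
    (htriv : B.coactL = (TensorProduct.mk K C B.carrier) 1)
    -- `M` is a `D`-bimodule via `aL`, `aR`
    (aL : D ⊗[K] B.carrier →ₗ[K] B.carrier) (aR : B.carrier ⊗[K] D →ₗ[K] B.carrier)
    (haL_one : ∀ m : B.carrier, aL ((1 : D) ⊗ₜ[K] m) = m)
    (haL_mul : ∀ (d d' : D) (m : B.carrier),
      aL (d ⊗ₜ[K] aL (d' ⊗ₜ[K] m)) = aL ((d * d') ⊗ₜ[K] m))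
    (haR_one : ∀ m : B.carrier, aR (m ⊗ₜ[K] (1 : D)) = m)
    (haR_mul : ∀ (m : B.carrier) (d d' : D),
      aR (aR (m ⊗ₜ[K] d) ⊗ₜ[K] d') = aR (m ⊗ₜ[K] (d * d')))
    (hact_comm : ∀ (d : D) (m : B.carrier) (d' : D),
      aR (aL (d ⊗ₜ[K] m) ⊗ₜ[K] d') = aL (d ⊗ₜ[K] aR (m ⊗ₜ[K] d')))
    -- the right `C`-coaction of `M` is a morphism of `D`-bimodules, where `D` acts
    -- trivially (through the counit) on the `C`-factor
    (hcoactR_aL : B.coactR ∘ₗ aL =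
      (LinearMap.rTensor C aL) ∘ₗ (TensorProduct.assoc K D B.carrier C).symm.toLinearMap ∘ₗ
        (LinearMap.lTensor D B.coactR))
    (hcoactR_aR : B.coactR ∘ₗ aR =
      (LinearMap.rTensor C aR) ∘ₗ (TensorProduct.assoc K B.carrier D C).symm.toLinearMap ∘ₗ
        (LinearMap.lTensor B.carrier (TensorProduct.comm K C D).toLinearMap) ∘ₗ
          (TensorProduct.assoc K B.carrier C D).toLinearMap ∘ₗ
            (LinearMap.rTensor D B.coactR)) :
    -- (1) every differential of the coHochschild complex is a morphism of left
    -- `D`-modules for the adjoint action on the coefficients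
    (∀ i : ℕ,
      (cobarD (Coalgebra.comul (R := K) (A := C)) i B) ∘ₗ
          Dact (Coalgebra.comul (R := K) (A := C)) D i B (adjointAction aL aR) =
        Dact (Coalgebra.comul (R := K) (A := C)) D (i+1) B (adjointAction aL aR) ∘ₗ
          (LinearMap.lTensor D (cobarD (Coalgebra.comul (R := K) (A := C)) i B))) ∧
    -- (2) consequently the cocycles are a `D`-submodule ...
    (∀ i : ℕ,
      ∃ aker : D ⊗[K] LinearMap.ker (cobarD (Coalgebra.comul (R := K) (A := C)) i B) →ₗ[K]
          LinearMap.ker (cobarD (Coalgebra.comul (R := K) (A := C)) i B),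
        (LinearMap.ker (cobarD (Coalgebra.comul (R := K) (A := C)) i B)).subtype ∘ₗ aker =
          Dact (Coalgebra.comul (R := K) (A := C)) D i B (adjointAction aL aR) ∘ₗ
            (LinearMap.lTensor D
              (LinearMap.ker (cobarD (Coalgebra.comul (R := K) (A := C)) i B)).subtype)) ∧
    -- ... and each coHochschild homology group inherits a left adjoint `D`-module
    -- structure from the one on the cocycles
    (∀ (i : ℕ)
      (aker : D ⊗[K] LinearMap.ker (cobarD (Coalgebra.comul (R := K) (A := C)) (i+1) B) →ₗ[K]
          LinearMap.ker (cobarD (Coalgebra.comul (R := K) (A := C)) (i+1) B)),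
      ((LinearMap.ker (cobarD (Coalgebra.comul (R := K) (A := C)) (i+1) B)).subtype ∘ₗ aker =
        Dact (Coalgebra.comul (R := K) (A := C)) D (i+1) B (adjointAction aL aR) ∘ₗ
          (LinearMap.lTensor D
            (LinearMap.ker (cobarD (Coalgebra.comul (R := K) (A := C)) (i+1) B)).subtype)) →
      ∃ a' : D ⊗[K] (LinearMap.ker (cobarD (Coalgebra.comul (R := K) (A := C)) (i+1) B) ⧸
              (Submodule.comap
                (LinearMap.ker (cobarD (Coalgebra.comul (R := K) (A := C)) (i+1) B)).subtype
                (LinearMap.range (cobarD (Coalgebra.comul (R := K) (A := C)) i B)))) →ₗ[K]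
            (LinearMap.ker (cobarD (Coalgebra.comul (R := K) (A := C)) (i+1) B) ⧸
              (Submodule.comap
                (LinearMap.ker (cobarD (Coalgebra.comul (R := K) (A := C)) (i+1) B)).subtype
                (LinearMap.range (cobarD (Coalgebra.comul (R := K) (A := C)) i B)))),
        a' ∘ₗ (LinearMap.lTensor D
            (Submodule.comap
                (LinearMap.ker (cobarD (Coalgebra.comul (R := K) (A := C)) (i+1) B)).subtype
                (LinearMap.range (cobarD (Coalgebra.comul (R := K) (A := C)) i B))).mkQ) =
          (Submodule.comap
              (LinearMap.ker (cobarD (Coalgebra.comul (R := K) (A := C)) (i+1) B)).subtype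
              (LinearMap.range (cobarD (Coalgebra.comul (R := K) (A := C)) i B))).mkQ ∘ₗ
            aker) :=
  cobar_differentials_are_D_module_morphisms_general B htriv aL aR hcoactR_aL hcoactR_aR
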